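/- If (x_n) is a left K-Cauchy sequence in (Σ^∞, q_b) such that for each n there exists m > n with x_n a strict prefix of x_m (for all n beyond some index n_1 at which the sequence becomes prefix-increasing), then the supremum x = ⊔{x_n : n ≥ n_1} in the prefix order exists, has infinite length, and is the Yoneda-limit of (x_n). -/

import Mathlib

open scoped NNReal ENNReal

attribute [local instance] Classical.propDecidable

universe u

structure QuasiMetric (X : Type u) where
  d : X → X → ℝ≥0
  eq_iff : ∀ x y, (d x y = 0 ∧ d y x = 0) ↔ x = y
  triangle : ∀ x y z, d x y ≤ d x z + d z y

/-- The order on formal balls: `(x,r) ⊑ (y,s)` iff `d x y ≤ r - s` (real subtraction). -/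
def BallLE {X : Type u} (d : X → X → ℝ≥0) (b c : X × ℝ≥0) : Prop :=
  (d b.1 c.1 : ℝ) ≤ (b.2 : ℝ) - (c.2 : ℝ)

def IsUpperBound {β : Type*} (le : β → β → Prop) (D : Set β) (u : β) : Prop :=
  ∀ a ∈ D, le a u

def IsLub' {β : Type*} (le : β → β → Prop) (D : Set β) (u : β) : Prop :=
  IsUpperBound le D u ∧ ∀ v, IsUpperBound le D v → le u v

def DirectedSubset {β : Type*} (le : β → β → Prop) (D : Set β) : Prop :=
  D.Nonempty ∧ ∀ a ∈ D, ∀ b ∈ D, ∃ c ∈ D, le a c ∧ le b c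

/-- `a` is way below `b`. -/
def WayBelow {β : Type*} (le : β → β → Prop) (a b : β) : Prop :=
  ∀ D : Set β, DirectedSubset le D → ∀ s, IsLub' le D s → le b s → ∃ u ∈ D, le a u

def LeftKCauchyNet {X : Type u} {Λ : Type*} (d : X → X → ℝ≥0) (le : Λ → Λ → Prop)
    (f : Λ → X) : Prop :=
  ∀ ε : ℝ≥0, 0 < ε → ∃ a, ∀ b c, le a b → le b c → d (f b) (f c) < ε

/-- `x` is a Yoneda-limit of the net `f`: for all `y`, `d x y = inf_a sup_{b ≥ a} d (f b) y`
(computed in `ℝ≥0∞` so that the inf/sup always exist). -/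
def IsYonedaLimit {X : Type u} {Λ : Type*} (d : X → X → ℝ≥0) (le : Λ → Λ → Prop)
    (f : Λ → X) (x : X) : Prop :=
  ∀ y, (d x y : ℝ≥0∞) = ⨅ a : Λ, ⨆ b : Λ, ⨆ _ : le a b, (d (f b) y : ℝ≥0∞)

/-- Finite and infinite words over `α`: partial functions on `ℕ` with downward-closed domain. -/
def Word (α : Type u) : Type u := {f : ℕ → Option α // ∀ n, f n = none → f (n + 1) = none}

def emptyWord (α : Type u) : Word α := ⟨fun _ => none, fun _ _ => rfl⟩

/-- The prefix order on words. -/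
def wpre {α : Type u} (x y : Word α) : Prop := ∀ n a, x.1 n = some a → y.1 n = some a

/-- The length of a word, in `ℕ∞`. -/
noncomputable def wlen {α : Type u} (x : Word α) : ℕ∞ := ⨅ n ∈ {n : ℕ | x.1 n = none}, (n : ℕ∞)

/-- `pw n = 2^{-n}`, with `2^{-∞} = 0`. -/
noncomputable def pw (n : ℕ∞) : ℝ≥0 := if n = ⊤ then 0 else (2 : ℝ≥0)⁻¹ ^ n.toNat

/-- The balanced quasi-metric on words. -/
noncomputable def qb {α : Type u} (x y : Word α) : ℝ≥0 :=
  if wpre x y then pw (wlen x) - pw (wlen y) else 1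

/-!
The tail `(x_n)_{n ≥ n₁}` is a chain for the prefix order, so its letterwise union is its
supremum `x`. Each strict extension strictly increases the length, so the lengths are unbounded
and `x` is infinite. The Yoneda condition says `q_b(x, y) = limsup_n q_b(x_n, y)`. If `x ⊑ y`
then `q_b(x_n, y) ≤ 2^{-ℓ(x_n)} → 0 = q_b(x, y)`; otherwise some letter of `x` that `y` lacks
is eventually present in every `x_n`, so `q_b(x_n, y) = 1 = q_b(x, y)` eventually.
-/

open Filter

section Words

variable {α : Type u}

lemma Word.eq_none_of_le (x : Word α) {j k : ℕ} (hjk : j ≤ k) (hj : x.1 j = none) :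
    x.1 k = none := by
  induction k, hjk using Nat.le_induction with
  | base => exact hj
  | succ k _ ih => exact x.2 k ih

lemma wpre_trans {x y z : Word α} (hxy : wpre x y) (hyz : wpre y z) : wpre x z :=
  fun n a hn => hyz n a (hxy n a hn)

lemma wlen_le_of_eq_none {x : Word α} {n : ℕ} (h : x.1 n = none) : wlen x ≤ n :=
  iInf₂_le n h

lemma lt_wlen_iff {x : Word α} {k : ℕ} : (k : ℕ∞) < wlen x ↔ x.1 k ≠ none := by
  refine ⟨fun h hk => (wlen_le_of_eq_none hk).not_gt h, fun h => ?_⟩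
  have hk : ((k + 1 : ℕ) : ℕ∞) ≤ wlen x := le_iInf₂ fun m hm => by
    have : k < m := by
      by_contra! hmk
      exact h (x.eq_none_of_le hmk hm)
    exact_mod_cast this
  exact lt_of_lt_of_le (by exact_mod_cast k.lt_succ_self) hk

lemma wlen_le_of_wpre {x y : Word α} (h : wpre x y) : wlen x ≤ wlen y :=
  le_iInf₂ fun n hn => wlen_le_of_eq_none <| by
    cases hx : x.1 n with
    | none => rfl
    | some a => cases (h n a hx).symm.trans hn

lemma wlen_lt_of_wpre_of_ne {x y : Word α} (h : wpre x y) (hne : x ≠ y) : wlen x < wlen y := by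
  obtain ⟨k, hk⟩ : ∃ k, x.1 k ≠ y.1 k := by
    by_contra! hc
    exact hne (Subtype.ext (funext hc))
  have hxk : x.1 k = none := by
    cases hx : x.1 k with
    | none => rfl
    | some a => exact absurd (hx.trans (h k a hx).symm) hk
  calc wlen x ≤ k := wlen_le_of_eq_none hxk
    _ < wlen y := lt_wlen_iff.2 (hxk ▸ hk).symm

lemma wlen_eq_top_of_eventually {ι : Type*} {l : Filter ι} [l.NeBot] (f : ι → Word α)
    (x : Word α) (hpre : ∀ᶠ i in l, wpre (f i) x)
    (hlen : ∀ k : ℕ, ∀ᶠ i in l, (k : ℕ∞) < wlen (f i)) : wlen x = ⊤ :=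
  ENat.eq_top_iff_forall_gt.2 fun k =>
    let ⟨_, hi, hk⟩ := (hpre.and (hlen k)).exists
    hk.trans_le (wlen_le_of_wpre hi)

lemma exists_lt_wlen_of_forall_strict_extension (f : ℕ → Word α) (n₁ : ℕ)
    (hstr : ∀ n, n₁ ≤ n → ∃ m, n < m ∧ wpre (f n) (f m) ∧ f n ≠ f m) (k : ℕ) :
    ∃ n, n₁ ≤ n ∧ (k : ℕ∞) < wlen (f n) := by
  induction k with
  | zero =>
    obtain ⟨m, hm, hpre, hne⟩ := hstr n₁ le_rfl
    exact ⟨m, hm.le, zero_le.trans_lt (wlen_lt_of_wpre_of_ne hpre hne)⟩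
  | succ k ih =>
    obtain ⟨n, hn, hk⟩ := ih
    obtain ⟨m, hm, hpre, hne⟩ := hstr n hn
    refine ⟨m, hn.trans hm.le, ?_⟩
    push_cast
    exact (Order.add_one_le_of_lt hk).trans_lt (wlen_lt_of_wpre_of_ne hpre hne)

/-- The letterwise union of a set of words; for a prefix chain it is the supremum. -/
noncomputable def wsup (D : Set (Word α)) : Word α :=
  ⟨fun k => if h : ∃ c, ∃ w ∈ D, w.1 k = some c then some h.choose else none, by
    intro k hk
    dsimp only at hk ⊢
    split_ifs at hk with h
    rw [dif_neg]
    rintro ⟨c, w, hw, hwk⟩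
    obtain ⟨c', hc'⟩ := Option.ne_none_iff_exists'.1 fun hnone => by simp [w.2 k hnone] at hwk
    exact h ⟨c', w, hw, hc'⟩⟩

lemma IsChain.letter_eq_of_wpre {D : Set (Word α)} (hD : IsChain wpre D) {u v : Word α}
    (hu : u ∈ D) (hv : v ∈ D) {k : ℕ} {a b : α} (hua : u.1 k = some a) (hvb : v.1 k = some b) :
    a = b := by
  rcases eq_or_ne u v with rfl | hne
  · exact Option.some_inj.1 (hua.symm.trans hvb)
  rcases hD hu hv hne with h | h
  · exact Option.some_inj.1 ((h k a hua).symm.trans hvb)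
  · exact Option.some_inj.1 (hua.symm.trans (h k b hvb))

lemma wsup_eq_some_iff {D : Set (Word α)} (hD : IsChain wpre D) {k : ℕ} {c : α} :
    (wsup D).1 k = some c ↔ ∃ w ∈ D, w.1 k = some c := by
  dsimp only [wsup]
  constructor
  · intro h
    split_ifs at h with hex
    obtain ⟨w, hw, hwk⟩ := hex.choose_spec
    exact ⟨w, hw, Option.some_inj.1 h ▸ hwk⟩
  · rintro ⟨w, hw, hwk⟩
    have hex : ∃ c, ∃ w ∈ D, w.1 k = some c := ⟨c, w, hw, hwk⟩
    obtain ⟨w', hw', hw'k⟩ := hex.choose_spec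
    rw [dif_pos hex, hD.letter_eq_of_wpre hw' hw hw'k hwk]

lemma isLub'_wsup {D : Set (Word α)} (hD : IsChain wpre D) : IsLub' wpre D (wsup D) :=
  ⟨fun w hw _ _ hk => (wsup_eq_some_iff hD).2 ⟨w, hw, hk⟩, fun _ hv _ _ hk =>
    let ⟨w, hw, hwk⟩ := (wsup_eq_some_iff hD).1 hk
    hv w hw _ _ hwk⟩

lemma pw_le_inv_two_pow {n : ℕ∞} {k : ℕ} (h : (k : ℕ∞) ≤ n) : pw n ≤ 2⁻¹ ^ k := by
  unfold pw
  split_ifs with hn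
  · exact zero_le
  · lift n to ℕ using hn
    exact pow_le_pow_of_le_one zero_le (by norm_num) (by simpa using h)

lemma qb_eq_zero {x y : Word α} (hx : wlen x = ⊤) (h : wpre x y) : qb x y = 0 := by
  simp [qb, h, hx, pw]

lemma qb_eq_one {x y : Word α} (h : ¬ wpre x y) : qb x y = 1 :=
  if_neg h

lemma qb_le_pw {x y : Word α} (h : wpre x y) : qb x y ≤ pw (wlen x) := by
  rw [qb, if_pos h]
  exact tsub_le_self

end Words

lemma isYonedaLimit_iff_limsup {X : Type*} (d : X → X → ℝ≥0) (f : ℕ → X) (x : X) :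
    IsYonedaLimit d (· ≤ ·) f x ↔
      ∀ y, (d x y : ℝ≥0∞) = limsup (fun n => (d (f n) y : ℝ≥0∞)) atTop := by
  simp only [IsYonedaLimit, limsup_eq_iInf_iSup_of_nat, ge_iff_le]

theorem isYonedaLimit_qb_of_eventually {α : Type u} (f : ℕ → Word α) (x : Word α)
    (hpre : ∀ᶠ n in atTop, wpre (f n) x) (hlen : ∀ k : ℕ, ∀ᶠ n in atTop, (k : ℕ∞) < wlen (f n)) :
    IsYonedaLimit qb (· ≤ ·) f x := by
  rw [isYonedaLimit_iff_limsup]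
  intro y
  by_cases hxy : wpre x y
  · rw [qb_eq_zero (wlen_eq_top_of_eventually f x hpre hlen) hxy, ENNReal.coe_zero, eq_comm]
    refine Tendsto.limsup_eq (ENNReal.tendsto_coe.2 (tendsto_order.2
      ⟨fun a ha => absurd ha (not_lt_zero (a := a)), fun ε hε => ?_⟩))
    obtain ⟨k, hk⟩ := exists_pow_lt_of_lt_one hε (by norm_num : (2⁻¹ : ℝ≥0) < 1)
    filter_upwards [hpre, hlen k] with n hn hnk
    calc qb (f n) y ≤ pw (wlen (f n)) := qb_le_pw (wpre_trans hn hxy)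
      _ ≤ 2⁻¹ ^ k := pw_le_inv_two_pow hnk.le
      _ < ε := hk
  · obtain ⟨k, c, hxk, hyk⟩ : ∃ k c, x.1 k = some c ∧ y.1 k ≠ some c := by
      simpa [wpre] using hxy
    have hfy : ∀ᶠ n in atTop, ¬ wpre (f n) y := by
      filter_upwards [hpre, hlen k] with n hn hnk hny
      obtain ⟨c', hc'⟩ := Option.ne_none_iff_exists'.1 (lt_wlen_iff.1 hnk)
      obtain rfl : c' = c := Option.some_inj.1 ((hn k c' hc').symm.trans hxk)
      exact hyk (hny k c' hc')
    rw [qb_eq_one hxy, limsup_congr (hfy.mono fun n hn => congrArg _ (qb_eq_one hn)),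
      limsup_const]

theorem stmt8_general {α : Type u} (f : ℕ → Word α) (n₁ : ℕ)
    (hpre : ∀ n m, n₁ ≤ n → n ≤ m → wpre (f n) (f m))
    (hstr : ∀ n, n₁ ≤ n → ∃ m, n < m ∧ wpre (f n) (f m) ∧ f n ≠ f m) :
    ∃ x : Word α, IsLub' wpre {w | ∃ n, n₁ ≤ n ∧ w = f n} x ∧ wlen x = ⊤ ∧
      IsYonedaLimit qb (· ≤ ·) f x := by
  set D := {w | ∃ n, n₁ ≤ n ∧ w = f n}
  have hD : IsChain wpre D := by
    rintro _ ⟨n, hn, rfl⟩ _ ⟨m, hm, rfl⟩ -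
    rcases le_total n m with h | h
    exacts [Or.inl (hpre n m hn h), Or.inr (hpre m n hm h)]
  have hlub := isLub'_wsup hD
  have hub : ∀ᶠ n in atTop, wpre (f n) (wsup D) :=
    eventually_atTop.2 ⟨n₁, fun n hn => hlub.1 _ ⟨n, hn, rfl⟩⟩
  have hlen : ∀ k : ℕ, ∀ᶠ n in atTop, (k : ℕ∞) < wlen (f n) := fun k => by
    obtain ⟨n, hn, hk⟩ := exists_lt_wlen_of_forall_strict_extension f n₁ hstr k
    exact eventually_atTop.2 ⟨n, fun m hm => hk.trans_le (wlen_le_of_wpre (hpre n m hn hm))⟩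
  exact ⟨wsup D, hlub, wlen_eq_top_of_eventually f _ hub hlen,
    isYonedaLimit_qb_of_eventually f _ hub hlen⟩

theorem stmt8 {α : Type u} (f : ℕ → Word α) (n₁ : ℕ)
    (hC : LeftKCauchyNet qb (· ≤ ·) f)
    (hpre : ∀ n m, n₁ ≤ n → n ≤ m → wpre (f n) (f m))
    (hstr : ∀ n, n₁ ≤ n → ∃ m, n < m ∧ wpre (f n) (f m) ∧ f n ≠ f m) :
    ∃ x : Word α, IsLub' wpre {w | ∃ n, n₁ ≤ n ∧ w = f n} x ∧ wlen x = ⊤ ∧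
      IsYonedaLimit qb (· ≤ ·) f x :=
  stmt8_general f n₁ hpre hstr
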